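/- Let n, m ≥ 1, d ≥ 2, c ≥ 0, b ≥ 0, and let x_1, …, x_m ∈ ℝⁿ. For any integer e ≥ 1, let N^{e} denote the class of functions f : ℝⁿ → ℝ of the form f(x) = ⟨w, h_{e−1}(x)⟩ + β, where h_0(x) = x, h_l(x) = ReLU(W_l h_{l−1}(x) + B_l) for l = 1, …, e−1, the W_l are real n×n matrices with ‖W_l‖_{2,∞} ≤ c, w ∈ ℝⁿ with ‖w‖₂ ≤ c, B_l ∈ ℝⁿ with ‖B_l‖_∞ ≤ b, and β ∈ ℝ with |β| ≤ b. Then the empirical Rademacher complexities on x_1, …, x_m satisfy R(N^{d}) ≤ 2·c·√n · R(N^{d−1}) + b. -/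

import Mathlib

/-!
A depth-`d` network is `f = ∑ⱼ wⱼ ReLU(gⱼ) + β` with every `gⱼ` of depth `d - 1`. For a fixed
sign vector `ε`, `∑ᵢ εᵢ f(xᵢ) ≤ ‖w‖₁ maxⱼ |∑ᵢ εᵢ ReLU(gⱼ(xᵢ))| + m b` with `‖w‖₁ ≤ √n c`, and
the absolute value is at most the sum of the ReLU-suprema at `ε` and at `-ε`. Averaging over `ε`
both contribute equally, whence the factor `2`, and the contraction lemma removes the ReLU.
-/

/-- Entrywise ReLU on vectors. -/
noncomputable def relu {p : ℕ} (v : Fin p → ℝ) : Fin p → ℝ := fun i => max (v i) 0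

/-- The hidden layers of a fully connected ReLU network:
`netHidden W B 0 x = x` and `netHidden W B l x = ReLU(W l (netHidden W B (l-1) x) + B l)`. -/
noncomputable def netHidden {n : ℕ} (W : ℕ → Matrix (Fin n) (Fin n) ℝ) (B : ℕ → Fin n → ℝ) :
    ℕ → (Fin n → ℝ) → Fin n → ℝ
  | 0 => fun x => x
  | l + 1 => fun x => relu ((W (l + 1)).mulVec (netHidden W B l x) + B (l + 1))

/-- The class `N^{e,n}_{c,b}` of depth-`e` width-`n` ReLU networks `ℝⁿ → ℝ` whose weight
matrices have `L_{2,∞}` norm at most `c` (output weight vector of `ℓ₂` norm at most `c`) and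
whose biases are bounded by `b` in `ℓ∞` norm. -/
noncomputable def NNclass (n e : ℕ) (c b : ℝ) : Set ((Fin n → ℝ) → ℝ) :=
  { f | ∃ (W : ℕ → Matrix (Fin n) (Fin n) ℝ) (B : ℕ → Fin n → ℝ) (w : Fin n → ℝ) (β : ℝ),
      (∀ l i, Real.sqrt (∑ j, W l i j ^ 2) ≤ c) ∧
      (∀ l i, |B l i| ≤ b) ∧
      Real.sqrt (∑ j, w j ^ 2) ≤ c ∧ |β| ≤ b ∧
      ∀ x, f x = (∑ j, w j * netHidden W B (e - 1) x j) + β }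

/-- The empirical Rademacher complexity of a class `K` of functions `ℝⁿ → ℝ` on the points
`x 1, …, x m`: the average over all sign vectors `s ∈ {−1,1}^m` of
`sup_{f ∈ K} (1/m) Σ_i s_i f(x_i)`. -/
noncomputable def rademacher {n m : ℕ} (x : Fin m → Fin n → ℝ)
    (K : Set ((Fin n → ℝ) → ℝ)) : ℝ :=
  (1 / 2 ^ m : ℝ) * ∑ s : Fin m → Bool,
    ⨆ f : K, (1 / m : ℝ) * ∑ i, (if s i then (1 : ℝ) else -1) * (f : (Fin n → ℝ) → ℝ) (x i)

open Finset
open scoped Matrix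

def rsign (b : Bool) : ℝ := if b then 1 else -1

@[simp] lemma rsign_true : rsign true = 1 := rfl

@[simp] lemma rsign_false : rsign false = -1 := rfl

lemma rsign_not (b : Bool) : rsign (!b) = -rsign b := by cases b <;> simp

lemma abs_rsign (b : Bool) : |rsign b| = 1 := by cases b <;> simp

lemma abs_sum_rsign_mul_le {m : ℕ} (s : Fin m → Bool) {v : Fin m → ℝ} {M : ℝ}
    (hv : ∀ i, |v i| ≤ M) : |∑ i, rsign (s i) * v i| ≤ m * M :=
  calc |∑ i, rsign (s i) * v i| ≤ ∑ i, |rsign (s i) * v i| := abs_sum_le_sum_abs _ _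
    _ ≤ ∑ _i : Fin m, M := sum_le_sum fun i _ => by rw [abs_mul, abs_rsign, one_mul]; exact hv i
    _ = m * M := by simp

section Contraction

variable {ι : Type*} [Nonempty ι] {φ : ℝ → ℝ}

lemma sum_bool_ciSup_add_rsign_comp_le (hφ : LipschitzWith 1 φ) {r u : ι → ℝ} {R M : ℝ}
    (hr : ∀ t, |r t| ≤ R) (hu : ∀ t, |u t| ≤ M) :
    ∑ ε : Bool, ⨆ t, r t + rsign ε * φ (u t) ≤ ∑ ε : Bool, ⨆ t, r t + rsign ε * u t := by
  simp only [Fintype.sum_bool, rsign_true, rsign_false, one_mul, neg_one_mul, ← sub_eq_add_neg]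
  have hplus : ∀ t, r t + u t ≤ ⨆ t, r t + u t := le_ciSup ⟨R + M, Set.forall_mem_range.2
    fun t => by linarith [le_abs_self (r t), le_abs_self (u t), hr t, hu t]⟩
  have hminus : ∀ t, r t - u t ≤ ⨆ t, r t - u t := le_ciSup ⟨R + M, Set.forall_mem_range.2
    fun t => by linarith [le_abs_self (r t), neg_abs_le (u t), hr t, hu t]⟩
  refine ciSup_add_ciSup_le fun t t' => ?_
  -- `φ (u t) - φ (u t') ≤ |u t - u t'|`: pair the four terms according to the sign of `u t - u t'`.
  have hφt := hφ.le_add_mul (u t) (u t')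
  simp only [NNReal.coe_one, one_mul, Real.dist_eq] at hφt
  rcases le_total (u t') (u t) with h | h
  · rw [abs_of_nonneg (sub_nonneg.2 h)] at hφt
    linarith [hplus t, hminus t']
  · rw [abs_of_nonpos (sub_nonpos.2 h)] at hφt
    linarith [hplus t', hminus t]

/-- The offset `a` makes the statement strong enough for an induction on the number of signs. -/
theorem sum_ciSup_add_sum_rsign_comp_le (hφ : LipschitzWith 1 φ) :
    ∀ {m : ℕ} (a : ι → ℝ) (V : ι → Fin m → ℝ) {A M : ℝ}, (∀ t, |a t| ≤ A) →
      (∀ t i, |V t i| ≤ M) →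
      ∑ s : Fin m → Bool, ⨆ t, a t + ∑ i, rsign (s i) * φ (V t i) ≤
        ∑ s : Fin m → Bool, ⨆ t, a t + ∑ i, rsign (s i) * V t i
  | 0, _, _, _, _, _, _ => le_rfl
  | m + 1, a, V, A, M, ha, hV => by
    have hφV : ∀ t, |φ (V t 0)| ≤ |φ 0| + M := fun t => by
      have := hφ.dist_le_mul (V t 0) 0
      simp only [NNReal.coe_one, one_mul, Real.dist_eq, sub_zero] at this
      linarith [abs_sub_abs_le_abs_sub (φ (V t 0)) (φ 0), hV t 0]
    have hsplit : ∀ (ψ : ℝ → ℝ), ∑ s : Fin (m + 1) → Bool, ⨆ t, a t + ∑ i, rsign (s i) * ψ (V t i) =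
        ∑ s : Fin m → Bool, ∑ ε : Bool,
          ⨆ t, (a t + rsign ε * ψ (V t 0)) + ∑ i, rsign (s i) * ψ (V t i.succ) := fun ψ => by
      rw [← (Fin.consEquiv fun _ => Bool).sum_comp, Fintype.sum_prod_type, Finset.sum_comm]
      simp only [Fin.consEquiv_apply, Fin.sum_univ_succ, Fin.cons_zero, Fin.cons_succ, add_assoc]
    have hεφV : ∀ (ε : Bool) t, |a t + rsign ε * φ (V t 0)| ≤ A + (|φ 0| + M) := fun ε t =>
      (abs_add_le _ _).trans <| add_le_add (ha t) <| by
        rw [abs_mul, abs_rsign, one_mul]; exact hφV t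
    have hrest : ∀ (s : Fin m → Bool) t, |a t + ∑ i, rsign (s i) * V t i.succ| ≤ A + m * M :=
      fun s t => (abs_add_le _ _).trans <| add_le_add (ha t) <| abs_sum_rsign_mul_le s (hV t ·.succ)
    calc ∑ s : Fin (m + 1) → Bool, ⨆ t, a t + ∑ i, rsign (s i) * φ (V t i)
        = ∑ s : Fin m → Bool, ∑ ε : Bool,
            ⨆ t, (a t + rsign ε * φ (V t 0)) + ∑ i, rsign (s i) * φ (V t i.succ) := hsplit φ
      _ ≤ ∑ s : Fin m → Bool, ∑ ε : Bool,
            ⨆ t, (a t + rsign ε * φ (V t 0)) + ∑ i, rsign (s i) * V t i.succ := by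
        refine sum_comm.trans_le <| (sum_le_sum fun ε _ => ?_).trans_eq sum_comm
        exact sum_ciSup_add_sum_rsign_comp_le hφ _ (fun t i => V t i.succ) (hεφV ε)
          (fun t i => hV t i.succ)
      _ = ∑ s : Fin m → Bool, ∑ ε : Bool,
            ⨆ t, (a t + ∑ i, rsign (s i) * V t i.succ) + rsign ε * φ (V t 0) := by
        simp_rw [add_right_comm (a _)]
      _ ≤ ∑ s : Fin m → Bool, ∑ ε : Bool,
            ⨆ t, (a t + ∑ i, rsign (s i) * V t i.succ) + rsign ε * V t 0 :=
        sum_le_sum fun s _ => sum_bool_ciSup_add_rsign_comp_le hφ (hrest s) (hV · 0)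
      _ = ∑ s : Fin (m + 1) → Bool, ⨆ t, a t + ∑ i, rsign (s i) * V t i := by
        simp_rw [add_right_comm (a _)]
        exact (hsplit id).symm

end Contraction

noncomputable def signedSup {ι : Type*} {m : ℕ} (V : ι → Fin m → ℝ) (s : Fin m → Bool) : ℝ :=
  ⨆ t, ∑ i, rsign (s i) * V t i

section SignedSup

variable {ι : Type*} {m : ℕ} {V : ι → Fin m → ℝ} {M : ℝ}

lemma le_signedSup (hV : ∀ t i, |V t i| ≤ M) (s : Fin m → Bool) (t : ι) :
    ∑ i, rsign (s i) * V t i ≤ signedSup V s :=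
  le_ciSup ⟨m * M, Set.forall_mem_range.2 fun t =>
    (le_abs_self _).trans (abs_sum_rsign_mul_le s (hV t))⟩ t

lemma neg_le_signedSup_not (hV : ∀ t i, |V t i| ≤ M) (s : Fin m → Bool) (t : ι) :
    -∑ i, rsign (s i) * V t i ≤ signedSup V (fun i => !s i) := by
  simpa only [rsign_not, neg_mul, sum_neg_distrib] using le_signedSup hV (fun i => !s i) t

lemma signedSup_nonneg (hV : ∀ t i, |V t i| ≤ M) {t₀ : ι} (h₀ : V t₀ = 0)
    (s : Fin m → Bool) : 0 ≤ signedSup V s := by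
  simpa [h₀] using le_signedSup hV s t₀

lemma sum_signedSup_not (V : ι → Fin m → ℝ) :
    ∑ s : Fin m → Bool, signedSup V (fun i => !s i) = ∑ s, signedSup V s :=
  Equiv.sum_comp (Function.Involutive.toPerm (fun (s : Fin m → Bool) i => !s i)
    fun s => funext fun i => Bool.not_not (s i)) (signedSup V)

/-- The Ledoux–Talagrand contraction lemma. -/
theorem sum_signedSup_comp_le [Nonempty ι] {φ : ℝ → ℝ} (hφ : LipschitzWith 1 φ)
    (hV : ∀ t i, |V t i| ≤ M) :
    ∑ s, signedSup (fun t i => φ (V t i)) s ≤ ∑ s, signedSup V s := by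
  simpa [signedSup] using
    sum_ciSup_add_sum_rsign_comp_le hφ 0 V (A := 0) (by simp) hV

end SignedSup

def onSample {n m : ℕ} (x : Fin m → Fin n → ℝ) (K : Set ((Fin n → ℝ) → ℝ)) :
    K → Fin m → ℝ :=
  fun f i => (f : (Fin n → ℝ) → ℝ) (x i)

lemma rademacher_eq_sum_signedSup {n m : ℕ} (x : Fin m → Fin n → ℝ)
    (K : Set ((Fin n → ℝ) → ℝ)) :
    rademacher x K = 1 / 2 ^ m * (1 / m * ∑ s, signedSup (onSample x K) s) := by
  simp only [rademacher, signedSup, onSample, rsign, mul_sum,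
    Real.mul_iSup_of_nonneg (by positivity : (0 : ℝ) ≤ 1 / m)]

lemma abs_le_sqrt_sum_sq {ι : Type*} [Fintype ι] (w : ι → ℝ) (k : ι) :
    |w k| ≤ √(∑ j, w j ^ 2) :=
  Real.abs_le_sqrt (single_le_sum (f := fun j => w j ^ 2) (fun _ _ => sq_nonneg _) (mem_univ k))

lemma sum_abs_le_sqrt_card_mul_sqrt_sum_sq {ι : Type*} [Fintype ι] (w : ι → ℝ) :
    ∑ j, |w j| ≤ √(Fintype.card ι) * √(∑ j, w j ^ 2) := by
  rw [← Real.sqrt_mul (Nat.cast_nonneg _)]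
  exact Real.le_sqrt_of_sq_le (by simpa using sq_sum_le_card_mul_sum_sq (s := univ) (f := (|w ·|)))

lemma abs_sum_mul_le_card_mul {ι : Type*} [Fintype ι] {a v : ι → ℝ} {α β : ℝ}
    (ha : ∀ k, |a k| ≤ α) (hv : ∀ k, |v k| ≤ β) :
    |∑ k, a k * v k| ≤ Fintype.card ι * (α * β) :=
  calc |∑ k, a k * v k| ≤ ∑ k, |a k * v k| := abs_sum_le_sum_abs _ _
    _ ≤ ∑ _k : ι, α * β := sum_le_sum fun k _ => by
      rw [abs_mul]; exact mul_le_mul (ha k) (hv k) (abs_nonneg _) ((abs_nonneg _).trans (ha k))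
    _ = Fintype.card ι * (α * β) := by simp

lemma abs_max_zero_le (a : ℝ) : |max a 0| ≤ |a| := by
  simpa using abs_max_sub_max_le_abs a 0 0

lemma exists_abs_netHidden_le {n : ℕ} (c b R : ℝ) : ∀ l : ℕ, ∃ C : ℝ,
    ∀ (W : ℕ → Matrix (Fin n) (Fin n) ℝ) (B : ℕ → Fin n → ℝ) (y : Fin n → ℝ),
      (∀ l i j, |W l i j| ≤ c) → (∀ l i, |B l i| ≤ b) → (∀ j, |y j| ≤ R) →
      ∀ j, |netHidden W B l y j| ≤ C
  | 0 => ⟨R, fun _ _ _ _ _ hy => hy⟩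
  | l + 1 => by
    obtain ⟨C, hC⟩ := exists_abs_netHidden_le c b R l
    refine ⟨n * (c * C) + b, fun W B y hW hB hy j => ?_⟩
    calc |netHidden W B (l + 1) y j|
        ≤ |(W (l + 1) *ᵥ netHidden W B l y) j + B (l + 1) j| := abs_max_zero_le _
      _ ≤ |(W (l + 1) *ᵥ netHidden W B l y) j| + |B (l + 1) j| := abs_add_le _ _
      _ ≤ n * (c * C) + b := add_le_add
          (by simpa [Matrix.mulVec, dotProduct] using
            abs_sum_mul_le_card_mul (hW (l + 1) j) (hC W B y hW hB hy)) (hB _ _)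

lemma exists_abs_le_of_mem_NNclass (n e : ℕ) (c b R : ℝ) :
    ∃ C : ℝ, ∀ f ∈ NNclass n e c b, ∀ y : Fin n → ℝ, (∀ j, |y j| ≤ R) → |f y| ≤ C := by
  obtain ⟨C, hC⟩ := exists_abs_netHidden_le (n := n) c b R (e - 1)
  refine ⟨n * (c * C) + b, ?_⟩
  rintro f ⟨W, B, w, β, hW, hB, hw, hβ, hf⟩ y hy
  have hW' : ∀ l i j, |W l i j| ≤ c := fun l i j => (abs_le_sqrt_sum_sq _ j).trans (hW l i)
  rw [hf]
  exact (abs_add_le _ _).trans <| add_le_add (by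
    simpa using abs_sum_mul_le_card_mul (fun k => (abs_le_sqrt_sum_sq w k).trans hw)
      (hC W B y hW' hB hy)) hβ

-- Without this bound the suprema below would be the junk value `0` of an unbounded `⨆`.
lemma exists_abs_onSample_NNclass_le {n m : ℕ} (x : Fin m → Fin n → ℝ) (e : ℕ) (c b : ℝ) :
    ∃ M : ℝ, ∀ f i, |onSample x (NNclass n e c b) f i| ≤ M := by
  obtain ⟨C, hC⟩ := exists_abs_le_of_mem_NNclass n e c b ‖x‖
  exact ⟨C, fun f i => hC f f.2 (x i) fun j => by
    simpa only [Real.norm_eq_abs] using (norm_le_pi_norm (x i) j).trans (norm_le_pi_norm x i)⟩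

section ReLUNetworks

variable {n m : ℕ} {c b : ℝ}

lemma zero_mem_NNclass (n e : ℕ) (hc : 0 ≤ c) (hb : 0 ≤ b) :
    (fun _ => 0) ∈ NNclass n e c b :=
  ⟨0, 0, 0, 0, by simp [hc], by simp [hb], by simp [hc], by simp [hb], by simp⟩

lemma exists_relu_decomp_of_mem_NNclass {e : ℕ} {f : (Fin n → ℝ) → ℝ}
    (hf : f ∈ NNclass n (e + 2) c b) :
    ∃ g : Fin n → (Fin n → ℝ) → ℝ, (∀ j, g j ∈ NNclass n (e + 1) c b) ∧
      ∃ (w : Fin n → ℝ) (β : ℝ), √(∑ j, w j ^ 2) ≤ c ∧ |β| ≤ b ∧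
        ∀ y, f y = ∑ j, w j * max (g j y) 0 + β := by
  obtain ⟨W, B, w, β, hW, hB, hw, hβ, hf⟩ := hf
  exact ⟨fun j y => (W (e + 1) *ᵥ netHidden W B e y) j + B (e + 1) j,
    fun j => ⟨W, B, W (e + 1) j, B (e + 1) j, hW, hB, hW _ j, hB _ j, fun _ => rfl⟩,
    w, β, hw, hβ, hf⟩

lemma signedSup_onSample_NNclass_le (hc : 0 ≤ c) (hb : 0 ≤ b) (x : Fin m → Fin n → ℝ) (e : ℕ)
    (s : Fin m → Bool) :
    signedSup (onSample x (NNclass n (e + 2) c b)) s ≤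
      √n * c * (signedSup (fun g i => max (onSample x (NNclass n (e + 1) c b) g i) 0) s +
        signedSup (fun g i => max (onSample x (NNclass n (e + 1) c b) g i) 0)
          (fun i => !s i)) + m * b := by
  set V : NNclass n (e + 1) c b → Fin m → ℝ := fun g i => max (onSample x _ g i) 0
  set A := signedSup V s + signedSup V (fun i => !s i)
  obtain ⟨M, hM⟩ := exists_abs_onSample_NNclass_le x (e + 1) c b
  have hV : ∀ g i, |V g i| ≤ M := fun g i => (abs_max_zero_le _).trans (hM g i)
  have hV₀ : V ⟨_, zero_mem_NNclass n (e + 1) hc hb⟩ = 0 := by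
    funext i; simp [V, onSample]
  have hA₁ := signedSup_nonneg hV hV₀ s
  have hA₂ := signedSup_nonneg hV hV₀ (fun i => !s i)
  have : Nonempty (NNclass n (e + 2) c b) := ⟨⟨_, zero_mem_NNclass n (e + 2) hc hb⟩⟩
  refine ciSup_le fun ⟨f, hf⟩ => ?_
  obtain ⟨g, hg, w, β, hw, hβ, hfg⟩ := exists_relu_decomp_of_mem_NNclass hf
  have hu : ∀ j, |∑ i, rsign (s i) * V ⟨g j, hg j⟩ i| ≤ A := fun j => abs_le.2
    ⟨by linarith [neg_le_signedSup_not hV s ⟨g j, hg j⟩],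
      by linarith [le_signedSup hV s ⟨g j, hg j⟩]⟩
  calc ∑ i, rsign (s i) * onSample x _ ⟨f, hf⟩ i
      = ∑ j, w j * ∑ i, rsign (s i) * V ⟨g j, hg j⟩ i + ∑ i, rsign (s i) * β := by
        simp only [onSample, V, hfg, mul_add, mul_sum, sum_add_distrib]
        rw [sum_comm]
        simp only [mul_left_comm]
    _ ≤ ∑ j, |w j| * A + m * b :=
        add_le_add (sum_le_sum fun j _ => (le_abs_self _).trans <|
            (abs_mul _ _).trans_le (mul_le_mul_of_nonneg_left (hu j) (abs_nonneg _)))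
          ((le_abs_self _).trans (abs_sum_rsign_mul_le s fun _ => hβ))
    _ ≤ √n * c * A + m * b := by
        rw [← sum_mul]
        gcongr
        simpa using (sum_abs_le_sqrt_card_mul_sqrt_sum_sq w).trans
          (mul_le_mul_of_nonneg_left hw (Real.sqrt_nonneg _))

lemma sum_signedSup_onSample_NNclass_le (hc : 0 ≤ c) (hb : 0 ≤ b) (x : Fin m → Fin n → ℝ)
    (e : ℕ) :
    ∑ s, signedSup (onSample x (NNclass n (e + 2) c b)) s ≤
      2 * c * √n * ∑ s, signedSup (onSample x (NNclass n (e + 1) c b)) s + 2 ^ m * (m * b) := by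
  obtain ⟨M, hM⟩ := exists_abs_onSample_NNclass_le x (e + 1) c b
  have : Nonempty (NNclass n (e + 1) c b) := ⟨⟨_, zero_mem_NNclass n (e + 1) hc hb⟩⟩
  set S := onSample x (NNclass n (e + 1) c b)
  have hrelu : LipschitzWith 1 fun v : ℝ => max v 0 := LipschitzWith.id.max_const 0
  calc ∑ s, signedSup (onSample x (NNclass n (e + 2) c b)) s
      ≤ ∑ s : Fin m → Bool, (√n * c * (signedSup (fun g i => max (S g i) 0) s +
          signedSup (fun g i => max (S g i) 0) (fun i => !s i)) + m * b) :=
        sum_le_sum fun s _ => signedSup_onSample_NNclass_le hc hb x e s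
    _ = 2 * c * √n * ∑ s, signedSup (fun g i => max (S g i) 0) s + 2 ^ m * (m * b) := by
        simp only [sum_add_distrib, ← mul_sum, sum_signedSup_not, sum_const, card_univ,
          Fintype.card_fun, Fintype.card_bool, Fintype.card_fin, nsmul_eq_mul]
        push_cast
        ring
    _ ≤ 2 * c * √n * ∑ s, signedSup S s + 2 ^ m * (m * b) := by
        gcongr 2 * c * √n * ?_ + _
        exact (sum_signedSup_comp_le hrelu hM :)

end ReLUNetworks

theorem rademacher_layer_peeling_general (n m d : ℕ) (hm : 1 ≤ m) (hd : 2 ≤ d)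
    (c b : ℝ) (hc : 0 ≤ c) (hb : 0 ≤ b) (x : Fin m → Fin n → ℝ) :
    rademacher x (NNclass n d c b) ≤
      2 * c * Real.sqrt n * rademacher x (NNclass n (d - 1) c b) + b := by
  obtain ⟨e, rfl⟩ : ∃ e, d = e + 2 := ⟨d - 2, by omega⟩
  have hm₀ : (m : ℝ) ≠ 0 := by positivity
  rw [show e + 2 - 1 = e + 1 from rfl, rademacher_eq_sum_signedSup, rademacher_eq_sum_signedSup]
  calc 1 / 2 ^ m * (1 / m * ∑ s, signedSup (onSample x (NNclass n (e + 2) c b)) s)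
      ≤ 1 / 2 ^ m * (1 / m * (2 * c * √n * ∑ s, signedSup (onSample x (NNclass n (e + 1) c b)) s
          + 2 ^ m * (m * b))) := by
        gcongr
        exact sum_signedSup_onSample_NNclass_le hc hb x e
    _ = _ := by field_simp

/-- Layer-peeling recursion for the Rademacher complexity of depth-`d` ReLU
networks with `L_{2,∞}`-bounded weights and bounded biases:
`R(N^d) ≤ 2 c √n · R(N^{d−1}) + b`. -/
theorem rademacher_layer_peeling (n m d : ℕ) (hn : 1 ≤ n) (hm : 1 ≤ m) (hd : 2 ≤ d)
    (c b : ℝ) (hc : 0 ≤ c) (hb : 0 ≤ b) (x : Fin m → Fin n → ℝ) :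
    rademacher x (NNclass n d c b) ≤
      2 * c * Real.sqrt n * rademacher x (NNclass n (d - 1) c b) + b :=
  rademacher_layer_peeling_general n m d hm hd c b hc hb x
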